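/- For n = 2^d, d ≥ 1, and 2 ≤ m ≤ d + 1, the K_{1,m}-structure connectivity of FDSC_n is at most ⌊d/2⌋ + 1; i.e., there exist ⌊d/2⌋ + 1 vertex-disjoint-or-overlapping subgraphs of FDSC_n, each isomorphic to K_{1,m}, whose removal disconnects FDSC_n (in fact isolates the vertex B̄_1 B_1). -/

import Mathlib

open scoped Classical

namespace FDSC

/-- Vertices of `FDSC_n` with `n = 2^d`: binary strings of length `2^d`. -/
abbrev V (d : ℕ) : Type := Fin (2 ^ d) → Bool

/-- Bit `i` of a vertex (out-of-range bits are `false`). -/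
def get {d : ℕ} (u : V d) (i : ℕ) : Bool :=
  if h : i < 2 ^ d then u ⟨i, h⟩ else false

def ofFun {d : ℕ} (f : ℕ → Bool) : V d := fun i => f i

/-- Flip bit `i`. -/
def flip {d : ℕ} (i : ℕ) (u : V d) : V d :=
  ofFun (fun j => if j = i then !(get u j) else get u j)

/-- The two initial blocks of length `L` coincide (`m₁ = m₂`). -/
def sameHalves {d : ℕ} (L : ℕ) (u : V d) : Prop :=
  ∀ i < L, get u i = get u (i + L)

/-- Swap the two initial blocks of length `L` (`m₂ m₁ m₃`). -/
def swapHalves {d : ℕ} (L : ℕ) (u : V d) : V d :=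
  ofFun (fun i => if i < L then get u (i + L)
    else if i < 2 * L then get u (i - L) else get u i)

/-- Complement the two initial blocks of length `L` (`m̄₁ m̄₂ m₃`). -/
def complHalves {d : ℕ} (L : ℕ) (u : V d) : V d :=
  ofFun (fun i => if i < 2 * L then !(get u i) else get u i)

/-- Divide-and-swap neighbor for block length `L`. -/
noncomputable def dsNeighbor {d : ℕ} (L : ℕ) (u : V d) : V d :=
  if sameHalves L u then complHalves L u else swapHalves L u

/-- Adjacency in `FDSC_n`: the `e(1)`-edge (flip first bit), the `e(f)`-edge
(flip second bit), and the `e(2n/2^k)`-edges for `1 ≤ k ≤ d`. -/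
def PreAdj {d : ℕ} (u v : V d) : Prop :=
  u ≠ v ∧ (v = flip 0 u ∨ v = flip 1 u ∨
    ∃ k, 1 ≤ k ∧ k ≤ d ∧ v = dsNeighbor (2 ^ (d - k)) u)

/-- The folded divide-and-swap cube `FDSC_n`, `n = 2^d`. -/
noncomputable def graph (d : ℕ) : SimpleGraph (V d) where
  Adj u v := PreAdj u v ∨ PreAdj v u
  symm := ⟨fun _ _ h => h.symm⟩
  loopless := ⟨fun u h => by
    rcases h with h | h <;> exact h.1 rfl⟩

/-- Module addresses: binary strings of length `n/2 = 2^(d-1)`. -/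
abbrev W (d : ℕ) : Type := Fin (2 ^ (d - 1)) → Bool

def getW {d : ℕ} (B : W d) (i : ℕ) : Bool :=
  if h : i < 2 ^ (d - 1) then B ⟨i, h⟩ else false

/-- The vertex `A B` (inside-address `A`, module address `B`). -/
def concat {d : ℕ} (A B : W d) : V d :=
  ofFun (fun i => if i < 2 ^ (d - 1) then getW A i else getW B (i - 2 ^ (d - 1)))

/-- The module address of a vertex (its second half). -/
def secondHalf {d : ℕ} (u : V d) : W d :=
  fun i => get u ((i : ℕ) + 2 ^ (d - 1))

/-- Bitwise complement of a module address. -/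
def complW {d : ℕ} (B : W d) : W d := fun i => !(B i)

/-- The external neighbor of a vertex: the `e(n)`-edge endpoint (`k = 1`). -/
noncomputable def extNeighbor {d : ℕ} (u : V d) : V d :=
  dsNeighbor (2 ^ (d - 1)) u

/-- The star `K_{1,m}` with center `0`. -/
def star (m : ℕ) : SimpleGraph (Fin (m + 1)) where
  Adj i j := (i = 0 ∧ j ≠ 0) ∨ (j = 0 ∧ i ≠ 0)
  symm := ⟨fun _ _ h => h.symm⟩
  loopless := ⟨fun i h => by
    rcases h with ⟨h1, h2⟩ | ⟨h1, h2⟩ <;> exact h2 h1⟩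

/-- Deleting the vertex set `R` disconnects the graph or leaves a trivial graph. -/
def Disconnects {α : Type*} (G : SimpleGraph α) (R : Set α) : Prop :=
  ¬ (G.induce Rᶜ).Connected ∨ Rᶜ.Subsingleton

/-- `H`-structure connectivity: minimum number of subgraphs of `G`, each
isomorphic to `H`, whose vertex deletion disconnects `G` or leaves a trivial graph. -/
noncomputable def structConn {α β : Type*} (G : SimpleGraph α) (H : SimpleGraph β) : ℕ :=
  sInf { k | ∃ F : Finset G.Subgraph, F.card = k ∧
    (∀ S ∈ F, Nonempty (S.coe ≃g H)) ∧
    Disconnects G (⋃ S ∈ F, S.verts) }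

/-- `H`-substructure connectivity: members are isomorphic to connected subgraphs of `H`. -/
noncomputable def substructConn {α β : Type*} (G : SimpleGraph α) (H : SimpleGraph β) : ℕ :=
  sInf { k | ∃ F : Finset G.Subgraph, F.card = k ∧
    (∀ S ∈ F, S.coe.Connected ∧ ∃ H' : H.Subgraph, Nonempty (S.coe ≃g H'.coe)) ∧
    Disconnects G (⋃ S ∈ F, S.verts) }


/-! ### Auxiliary infrastructure -/

section Aux

variable {d : ℕ}

/-- Characteristic vertex of a predicate. -/
noncomputable def chi (d : ℕ) (p : ℕ → Prop) : V d := ofFun (fun i => decide (p i))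

lemma get_eq {u : V d} {i : ℕ} (h : i < 2 ^ d) : get u i = u ⟨i, h⟩ := dif_pos h

lemma chi_apply (p : ℕ → Prop) (i : Fin (2 ^ d)) : chi d p i = decide (p i) := rfl

lemma get_chi {p : ℕ → Prop} {i : ℕ} (h : i < 2 ^ d) : get (chi d p) i = decide (p i) := by
  rw [get_eq h]; rfl

lemma chi_ext {p q : ℕ → Prop} (h : ∀ i < 2 ^ d, p i ↔ q i) : chi d p = chi d q := by
  funext i
  simp only [chi_apply, decide_eq_decide]
  exact h i i.isLt

lemma chi_ne {p q : ℕ → Prop} {i : ℕ} (hi : i < 2 ^ d) (h : ¬ (p i ↔ q i)) :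
    chi d p ≠ chi d q := by
  intro he
  have := congrFun he ⟨i, hi⟩
  simp only [chi_apply, decide_eq_decide] at this
  exact h this

lemma eq_chi (u : V d) : u = chi d (fun x => get u x = true) := by
  funext i
  simp only [chi_apply, decide_eq_decide]
  rw [get_eq i.isLt]
  cases h : u i <;> simp [h]

lemma flip_chi (k : ℕ) (p : ℕ → Prop) :
    flip k (chi d p) = chi d (fun i => if i = k then ¬ p i else p i) := by
  funext i
  show (if (i : ℕ) = k then !(get (chi d p) i) else get (chi d p) i) = _
  rw [get_chi i.isLt]
  simp only [chi_apply]
  split <;> rename_i h <;> simp [h]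

lemma sameHalves_chi {p : ℕ → Prop} {L : ℕ} (h2L : 2 * L ≤ 2 ^ d) :
    sameHalves L (chi d p) ↔ ∀ i < L, (p i ↔ p (i + L)) := by
  unfold sameHalves
  constructor
  · intro h i hi
    have := h i hi
    rw [get_chi (by omega), get_chi (by omega)] at this
    simpa using this
  · intro h i hi
    rw [get_chi (by omega), get_chi (by omega)]
    simp [h i hi]

lemma complHalves_chi (p : ℕ → Prop) (L : ℕ) :
    complHalves L (chi d p) = chi d (fun i => if i < 2 * L then ¬ p i else p i) := by
  funext i
  show (if (i : ℕ) < 2 * L then !(get (chi d p) i) else get (chi d p) i) = _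
  rw [get_chi i.isLt]
  simp only [chi_apply]
  split <;> rename_i h <;> simp [h]

lemma swapHalves_chi {p : ℕ → Prop} {L : ℕ} (h2L : 2 * L ≤ 2 ^ d) :
    swapHalves L (chi d p) =
      chi d (fun i => if i < L then p (i + L) else if i < 2 * L then p (i - L) else p i) := by
  funext i
  show (if (i : ℕ) < L then get (chi d p) (i + L)
    else if (i : ℕ) < 2 * L then get (chi d p) (i - L) else get (chi d p) i) = _
  have hi := i.isLt
  simp only [chi_apply]
  split_ifs with h h2
  · exact get_chi (by omega)
  · exact get_chi (by omega)
  · exact get_chi hi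

lemma dsNeighbor_of_same {L : ℕ} {u : V d} (h : sameHalves L u) :
    dsNeighbor L u = complHalves L u := if_pos h

lemma dsNeighbor_of_not_same {L : ℕ} {u : V d} (h : ¬ sameHalves L u) :
    dsNeighbor L u = swapHalves L u := if_neg h

lemma flip_flip (k : ℕ) (u : V d) : flip k (flip k u) = u := by
  funext i
  show (if (i : ℕ) = k then !(get (flip k u) i) else get (flip k u) i) = u i
  have hi := i.isLt
  have hg : get (flip k u) (i : ℕ) =
      (if (i : ℕ) = k then !(get u i) else get u i) := by
    rw [get_eq hi]; rfl
  rw [hg, get_eq hi]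
  split <;> simp

lemma compl_compl (L : ℕ) (u : V d) : complHalves L (complHalves L u) = u := by
  funext i
  show (if (i : ℕ) < 2 * L then !(get (complHalves L u) i) else get (complHalves L u) i) = u i
  have hi := i.isLt
  have hg : get (complHalves L u) (i : ℕ) =
      (if (i : ℕ) < 2 * L then !(get u i) else get u i) := by
    rw [get_eq hi]; rfl
  rw [hg, get_eq hi]
  split <;> simp

lemma sameHalves_compl {L : ℕ} {u : V d} (h2L : 2 * L ≤ 2 ^ d) (h : sameHalves L u) :
    sameHalves L (complHalves L u) := by
  intro i hi
  have hg1 : get (complHalves L u) i = !(get u i) := by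
    rw [get_eq (show i < 2 ^ d by omega)]
    show (if i < 2 * L then !(get u i) else get u i) = _
    rw [if_pos (by omega)]
  have hg2 : get (complHalves L u) (i + L) = !(get u (i + L)) := by
    rw [get_eq (show i + L < 2 ^ d by omega)]
    show (if i + L < 2 * L then !(get u (i + L)) else get u (i + L)) = _
    rw [if_pos (by omega)]
  rw [hg1, hg2, h i hi]

lemma get_swapHalves {L i : ℕ} {u : V d} (hi : i < 2 ^ d) :
    get (swapHalves L u) i = (if i < L then get u (i + L)
      else if i < 2 * L then get u (i - L) else get u i) := by
  rw [get_eq hi]; rfl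

lemma swap_swap {L : ℕ} (h2L : 2 * L ≤ 2 ^ d) (u : V d) :
    swapHalves L (swapHalves L u) = u := by
  funext i
  have hi := i.isLt
  rw [show (swapHalves L (swapHalves L u)) i = get (swapHalves L (swapHalves L u)) i from
    (get_eq hi).symm, get_swapHalves hi]
  rw [show u i = get u i from (get_eq hi).symm]
  rcases lt_or_ge (i : ℕ) L with h | h
  · rw [if_pos h, get_swapHalves (by omega), if_neg (by omega), if_pos (by omega)]
    congr 1; omega
  · rw [if_neg (by omega)]
    rcases lt_or_ge (i : ℕ) (2 * L) with h2 | h2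
    · rw [if_pos h2, get_swapHalves (by omega), if_pos (by omega)]
      congr 1; omega
    · rw [if_neg (by omega), get_swapHalves hi, if_neg (by omega), if_neg (by omega)]

lemma not_sameHalves_swap {L : ℕ} {u : V d} (h2L : 2 * L ≤ 2 ^ d)
    (h : ¬ sameHalves L u) : ¬ sameHalves L (swapHalves L u) := by
  intro hs
  apply h
  intro i hi
  have := hs i hi
  rw [get_swapHalves (by omega), get_swapHalves (by omega)] at this
  rw [if_pos hi, if_neg (by omega), if_pos (by omega)] at this
  have he : i + L - L = i := by omega
  rw [he] at this
  exact this.symm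

lemma ds_ds {L : ℕ} (h2L : 2 * L ≤ 2 ^ d) (u : V d) :
    dsNeighbor L (dsNeighbor L u) = u := by
  by_cases h : sameHalves L u
  · rw [dsNeighbor_of_same h, dsNeighbor_of_same (sameHalves_compl h2L h), compl_compl]
  · rw [dsNeighbor_of_not_same h, dsNeighbor_of_not_same (not_sameHalves_swap h2L h),
      swap_swap h2L]

lemma adj_iff {u v : V d} : (graph d).Adj u v ↔ PreAdj u v := by
  constructor
  · rintro (h | ⟨hne, h | h | ⟨k, hk1, hk2, h⟩⟩)
    · exact h
    · exact ⟨Ne.symm hne, Or.inl (by rw [h, flip_flip])⟩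
    · exact ⟨Ne.symm hne, Or.inr (Or.inl (by rw [h, flip_flip]))⟩
    · refine ⟨Ne.symm hne, Or.inr (Or.inr ⟨k, hk1, hk2, ?_⟩)⟩
      have h2L : 2 * 2 ^ (d - k) ≤ 2 ^ d := by
        have : 2 * 2 ^ (d - k) = 2 ^ (d - k + 1) := by ring
        rw [this]
        exact Nat.pow_le_pow_right (by norm_num) (by omega)
      rw [h, ds_ds h2L]
  · exact Or.inl

end Aux


section Concrete

variable {d : ℕ}

lemma pw {a b : ℕ} (h : a ≤ b) : 2 ^ a ≤ 2 ^ b := Nat.pow_le_pow_right (by norm_num) h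

lemma pw' {a b : ℕ} (h : a < b) : 2 ^ a < 2 ^ b :=
  Nat.pow_lt_pow_right (by norm_num) h

/-- All-zero vertex. -/
noncomputable def ww (d : ℕ) : V d := chi d (fun _ => False)
/-- `1^(2^l) 0…0`. -/
noncomputable def vv (d l : ℕ) : V d := chi d (fun x => x < 2 ^ l)
/-- `0^(2^j) 1^(2^j) 0…0`. -/
noncomputable def uu (d j : ℕ) : V d := chi d (fun x => 2 ^ j ≤ x ∧ x < 2 ^ (j + 1))
/-- Unit vector at `b`. -/
noncomputable def eV (d b : ℕ) : V d := chi d (fun x => x = b)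
/-- `dsNeighbor (2^e) (uu d j)` in closed form. -/
noncomputable def dsLeaf (d j e : ℕ) : V d :=
  if e < j then chi d (fun x => x < 2 ^ (e + 1) ∨ (2 ^ j ≤ x ∧ x < 2 ^ (j + 1)))
  else if e = j then chi d (fun x => x < 2 ^ j)
  else chi d (fun x => 2 ^ e + 2 ^ j ≤ x ∧ x < 2 ^ e + 2 ^ (j + 1))
/-- `flip 0 (uu d j)` in closed form. -/
noncomputable def fLeaf (d j : ℕ) : V d :=
  chi d (fun x => x = 0 ∨ (2 ^ j ≤ x ∧ x < 2 ^ (j + 1)))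
/-- `dsNeighbor (2^e) (vv d 1)` in closed form, `1 ≤ e`. -/
noncomputable def tLeaf (d e : ℕ) : V d := chi d (fun x => 2 ^ e ≤ x ∧ x < 2 ^ e + 2)

/-- Witness vertex outside all the stars, for `d ≥ 2`. -/
noncomputable def xh (d : ℕ) : V d := chi d (fun x => x = 0 ∨ x = 3)

lemma flip_ww_zero : flip 0 (ww d) = eV d 0 := by
  rw [ww, flip_chi]
  exact chi_ext (fun i _ => by split <;> simp_all)

lemma flip_ww_one : flip 1 (ww d) = eV d 1 := by
  rw [ww, flip_chi]
  exact chi_ext (fun i _ => by split <;> simp_all)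

lemma ds_ww {k : ℕ} (hk1 : 1 ≤ k) (hkd : k ≤ d) :
    dsNeighbor (2 ^ (d - k)) (ww d) = vv d (d - k + 1) := by
  have h2L : 2 * 2 ^ (d - k) ≤ 2 ^ d := by
    have := pw (show d - k + 1 ≤ d by omega)
    omega
  have hs : sameHalves (2 ^ (d - k)) (ww d) := by
    rw [ww]
    exact (sameHalves_chi h2L).2 (fun i _ => Iff.rfl)
  rw [dsNeighbor_of_same hs, ww, complHalves_chi, vv]
  exact chi_ext (fun i _ => by split <;> simp <;> omega)

lemma flip_vv_zero : flip 0 (vv d 1) = eV d 1 := by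
  rw [vv, flip_chi]
  exact chi_ext (fun i _ => by split <;> [omega; omega])

lemma flip_vv_one : flip 1 (vv d 1) = eV d 0 := by
  rw [vv, flip_chi]
  exact chi_ext (fun i _ => by split <;> [omega; omega])

lemma ds_vv {e : ℕ} (he1 : 1 ≤ e) (hed : e + 1 ≤ d) :
    dsNeighbor (2 ^ e) (vv d 1) = tLeaf d e := by
  have h2L : 2 * 2 ^ e ≤ 2 ^ d := by have := pw (show e + 1 ≤ d from hed); omega
  have he2 : 2 ≤ 2 ^ e := by have := pw (show 1 ≤ e from he1); omega
  have hns : ¬ sameHalves (2 ^ e) (vv d 1) := by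
    rw [vv]
    intro hs
    have := (sameHalves_chi h2L).1 hs 0 (by omega)
    omega
  rw [dsNeighbor_of_not_same hns, vv, swapHalves_chi h2L, tLeaf]
  exact chi_ext (fun i _ => by split_ifs <;> omega)

lemma ds_uu {j e : ℕ} (hj1 : 1 ≤ j) (hjd : j + 1 ≤ d) (hed : e + 1 ≤ d) :
    dsNeighbor (2 ^ e) (uu d j) = dsLeaf d j e := by
  have h2L : 2 * 2 ^ e ≤ 2 ^ d := by have := pw (show e + 1 ≤ d from hed); omega
  have hj2 : 2 * 2 ^ j ≤ 2 ^ d := by have := pw (show j + 1 ≤ d from hjd); omega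
  have hpe : (1 : ℕ) ≤ 2 ^ e := Nat.one_le_two_pow
  have hpj : (1 : ℕ) ≤ 2 ^ j := Nat.one_le_two_pow
  rcases lt_trichotomy e j with hlt | heq | hgt
  · have hee : 2 ^ (e + 1) ≤ 2 ^ j := pw (by omega)
    have hs : sameHalves (2 ^ e) (uu d j) := by
      rw [uu]
      exact (sameHalves_chi h2L).2 (fun i hi => by omega)
    rw [dsNeighbor_of_same hs, uu, complHalves_chi, dsLeaf, if_pos hlt]
    exact chi_ext (fun i _ => by split <;> omega)
  · subst heq
    have hns : ¬ sameHalves (2 ^ e) (uu d e) := by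
      rw [uu]
      intro hs
      have := (sameHalves_chi h2L).1 hs 0 (by omega)
      omega
    rw [dsNeighbor_of_not_same hns, uu, swapHalves_chi h2L, dsLeaf,
      if_neg (lt_irrefl e), if_pos rfl]
    exact chi_ext (fun i _ => by split_ifs <;> omega)
  · have hee : 2 ^ (j + 1) ≤ 2 ^ e := pw (by omega)
    have hns : ¬ sameHalves (2 ^ e) (uu d j) := by
      rw [uu]
      intro hs
      have := (sameHalves_chi h2L).1 hs (2 ^ j) (by omega)
      omega
    rw [dsNeighbor_of_not_same hns, uu, swapHalves_chi h2L, dsLeaf,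
      if_neg (by omega), if_neg (by omega)]
    exact chi_ext (fun i _ => by split_ifs <;> omega)

lemma flip_uu {j : ℕ} (hj1 : 1 ≤ j) : flip 0 (uu d j) = fLeaf d j := by
  have h2 : (2:ℕ) ≤ 2 ^ j := by have := pw (show 1 ≤ j from hj1); omega
  rw [uu, fLeaf, flip_chi]
  exact chi_ext (fun i _ => by split <;> omega)

lemma vv_succ_eq_dsLeaf {j : ℕ} (hj1 : 1 ≤ j) : vv d (j + 1) = dsLeaf d j (j - 1) := by
  have h : 2 ^ (j - 1 + 1) = 2 ^ j := by congr 1; omega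
  rw [vv, dsLeaf, if_pos (by omega)]
  exact chi_ext (fun i _ => by omega)

lemma vv_eq_dsLeaf {j : ℕ} : vv d j = dsLeaf d j j := by
  rw [vv, dsLeaf, if_neg (lt_irrefl j), if_pos rfl]

/-! ### Distinctness -/

lemma dsLeaf_inj_lt {j e1 e2 : ℕ} (hj1 : 1 ≤ j) (hjd : j + 1 ≤ d)
    (h12 : e1 < e2) (h2 : e2 ≤ d - 1) : dsLeaf d j e1 ≠ dsLeaf d j e2 := by
  have hd1 : 1 ≤ d := by omega
  have hq1 : (1:ℕ) ≤ 2 ^ j := Nat.one_le_two_pow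
  have hq2 : (1:ℕ) ≤ 2 ^ e1 := Nat.one_le_two_pow
  have hq3 : (1:ℕ) ≤ 2 ^ e2 := Nat.one_le_two_pow
  rcases lt_trichotomy e1 j with ha | ha | ha <;>
    rcases lt_trichotomy e2 j with hb | hb | hb <;>
      try omega
  · -- A, A
    simp only [dsLeaf]
    rw [if_pos ha, if_pos hb]
    have f1 : 2 ^ (e1 + 1) < 2 ^ d := pw' (by omega)
    have f2 : 2 ^ (e1 + 1) < 2 ^ (e2 + 1) := pw' (by omega)
    have f3 : 2 ^ (e1 + 1) < 2 ^ j := pw' (by omega)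
    exact chi_ne f1 (by omega)
  · -- A, B
    simp only [dsLeaf]
    rw [if_pos ha, if_neg (by omega), if_pos hb]
    have f1 : 2 ^ j < 2 ^ d := pw' (by omega)
    have f2 : 2 ^ (e1 + 1) ≤ 2 ^ j := pw (by omega)
    exact chi_ne f1 (by omega)
  · -- A, C
    simp only [dsLeaf]
    rw [if_pos ha, if_neg (by omega), if_neg (by omega)]
    have f1 : 2 ^ j < 2 ^ d := pw' (by omega)
    have f2 : (1:ℕ) ≤ 2 ^ e2 := Nat.one_le_two_pow
    exact chi_ne f1 (by omega)
  · -- B, C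
    simp only [dsLeaf]
    rw [if_neg (by omega), if_pos ha, if_neg (by omega), if_neg (by omega)]
    have f1 : (0:ℕ) < 2 ^ d := by positivity
    have f2 : (1:ℕ) ≤ 2 ^ e2 := Nat.one_le_two_pow
    have f3 : (1:ℕ) ≤ 2 ^ j := Nat.one_le_two_pow
    exact chi_ne f1 (by omega)
  · -- C, C
    simp only [dsLeaf]
    rw [if_neg (by omega), if_neg (by omega), if_neg (by omega), if_neg (by omega)]
    have f1 : 2 ^ j < 2 ^ e1 := pw' (by omega)
    have f2 : 2 ^ (e1 + 1) ≤ 2 ^ d := pw (by omega)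
    have f3 : 2 ^ e1 < 2 ^ e2 := pw' (by omega)
    exact chi_ne (show 2 ^ e1 + 2 ^ j < 2 ^ d by omega) (by omega)

lemma dsLeaf_inj {j e1 e2 : ℕ} (hj1 : 1 ≤ j) (hjd : j + 1 ≤ d)
    (h1 : e1 ≤ d - 1) (h2 : e2 ≤ d - 1) (hne : e1 ≠ e2) :
    dsLeaf d j e1 ≠ dsLeaf d j e2 := by
  rcases hne.lt_or_gt with h | h
  · exact dsLeaf_inj_lt hj1 hjd h h2
  · exact (dsLeaf_inj_lt hj1 hjd h h1).symm

lemma fLeaf_ne_dsLeaf {j e : ℕ} (hj1 : 1 ≤ j) (hjd : j + 1 ≤ d) (he : e ≤ d - 1) :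
    fLeaf d j ≠ dsLeaf d j e := by
  have hd1 : (2:ℕ) ≤ 2 ^ d := pw (show 1 ≤ d by omega)
  have hj2 : (2:ℕ) ≤ 2 ^ j := by have := pw (show 1 ≤ j from hj1); omega
  have hpe : (1:ℕ) ≤ 2 ^ e := Nat.one_le_two_pow
  rcases lt_trichotomy e j with ha | ha | ha
  · rw [fLeaf]; simp only [dsLeaf]; rw [if_pos ha]
    exact chi_ne (show (1:ℕ) < 2 ^ d by omega) (by omega)
  · rw [fLeaf]; simp only [dsLeaf]; rw [if_neg (by omega), if_pos ha]
    exact chi_ne (show (1:ℕ) < 2 ^ d by omega) (by omega)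
  · rw [fLeaf]; simp only [dsLeaf]; rw [if_neg (by omega), if_neg (by omega)]
    exact chi_ne (show (0:ℕ) < 2 ^ d by positivity) (by omega)

lemma uu_ne_dsLeaf {j e : ℕ} (hj1 : 1 ≤ j) (hjd : j + 1 ≤ d) (he : e ≤ d - 1) :
    uu d j ≠ dsLeaf d j e := by
  have hpe : (1:ℕ) ≤ 2 ^ e := Nat.one_le_two_pow
  have hpj : (1:ℕ) ≤ 2 ^ j := Nat.one_le_two_pow
  rcases lt_trichotomy e j with ha | ha | ha
  · rw [uu]; simp only [dsLeaf]; rw [if_pos ha]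
    exact chi_ne (show (0:ℕ) < 2 ^ d by positivity) (by omega)
  · rw [uu]; simp only [dsLeaf]; rw [if_neg (by omega), if_pos ha]
    exact chi_ne (show (0:ℕ) < 2 ^ d by positivity) (by omega)
  · rw [uu]; simp only [dsLeaf]; rw [if_neg (by omega), if_neg (by omega)]
    exact chi_ne (show 2 ^ j < 2 ^ d from pw' (by omega)) (by omega)

lemma uu_ne_fLeaf {j : ℕ} : uu d j ≠ fLeaf d j := by
  have hpj : (1:ℕ) ≤ 2 ^ j := Nat.one_le_two_pow
  rw [uu, fLeaf]
  exact chi_ne (show (0:ℕ) < 2 ^ d by positivity) (by omega)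

lemma ww_ne_vv {l : ℕ} : ww d ≠ vv d l := by
  have : (1:ℕ) ≤ 2 ^ l := Nat.one_le_two_pow
  rw [ww, vv]
  exact chi_ne (show (0:ℕ) < 2 ^ d by positivity) (by simp)

lemma ww_ne_uu {j : ℕ} (hjd : j + 1 ≤ d) : ww d ≠ uu d j := by
  have : (1:ℕ) ≤ 2 ^ j := Nat.one_le_two_pow
  rw [ww, uu]
  exact chi_ne (show 2 ^ j < 2 ^ d from pw' (by omega)) (by simp; omega)

lemma ww_ne_eV {b : ℕ} (hb : b < 2 ^ d) : ww d ≠ eV d b := by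
  rw [ww, eV]
  exact chi_ne hb (by simp)

lemma ww_ne_tLeaf {e : ℕ} (he : e + 1 ≤ d) : ww d ≠ tLeaf d e := by
  rw [ww, tLeaf]
  exact chi_ne (show 2 ^ e < 2 ^ d from pw' (by omega)) (by simp)

lemma ww_ne_fLeaf {j : ℕ} : ww d ≠ fLeaf d j := by
  rw [ww, fLeaf]
  exact chi_ne (show (0:ℕ) < 2 ^ d by positivity) (by simp)

lemma ww_ne_dsLeaf {j e : ℕ} (hj1 : 1 ≤ j) (hjd : j + 1 ≤ d) (he : e ≤ d - 1) :
    ww d ≠ dsLeaf d j e := by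
  have hpe : (1:ℕ) ≤ 2 ^ e := Nat.one_le_two_pow
  have hpj : (1:ℕ) ≤ 2 ^ j := Nat.one_le_two_pow
  rcases lt_trichotomy e j with ha | ha | ha
  · rw [ww]; simp only [dsLeaf]; rw [if_pos ha]
    exact chi_ne (show (0:ℕ) < 2 ^ d by positivity) (by simp)
  · rw [ww]; simp only [dsLeaf]; rw [if_neg (by omega), if_pos ha]
    exact chi_ne (show (0:ℕ) < 2 ^ d by positivity) (by simp)
  · have f1 : 2 ^ j < 2 ^ e := pw' (by omega)
    have f2 : 2 ^ (e + 1) ≤ 2 ^ d := pw (by omega)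
    rw [ww]; simp only [dsLeaf]; rw [if_neg (by omega), if_neg (by omega)]
    exact chi_ne (show 2 ^ e + 2 ^ j < 2 ^ d by omega) (by simp; omega)

lemma eV_one_ne_zero : eV d 1 ≠ eV d 0 := by
  rw [eV, eV]
  exact chi_ne (show (0:ℕ) < 2 ^ d by positivity) (by omega)

lemma eV_one_ne_tLeaf {e : ℕ} (he1 : 1 ≤ e) (hd1 : 1 ≤ d) : eV d 1 ≠ tLeaf d e := by
  have : (2:ℕ) ≤ 2 ^ e := by have := pw (show 1 ≤ e from he1); omega
  have : (2:ℕ) ≤ 2 ^ d := by have := pw (show 1 ≤ d from hd1); omega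
  rw [eV, tLeaf]
  exact chi_ne (show (1:ℕ) < 2 ^ d by omega) (by omega)

lemma eV_zero_ne_tLeaf {e : ℕ} : eV d 0 ≠ tLeaf d e := by
  have : (1:ℕ) ≤ 2 ^ e := Nat.one_le_two_pow
  rw [eV, tLeaf]
  exact chi_ne (show (0:ℕ) < 2 ^ d by positivity) (by omega)

lemma tLeaf_inj_lt {e1 e2 : ℕ} (h12 : e1 < e2) (h2 : e2 ≤ d - 1) (hd1 : 1 ≤ d) :
    tLeaf d e1 ≠ tLeaf d e2 := by
  have f1 : 2 ^ e1 < 2 ^ d := pw' (by omega)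
  have f2 : 2 ^ e1 < 2 ^ e2 := pw' (by omega)
  rw [tLeaf, tLeaf]
  exact chi_ne f1 (by omega)

lemma vv_one_ne_eV_one : vv d 1 ≠ eV d 1 := by
  rw [vv, eV]
  exact chi_ne (show (0:ℕ) < 2 ^ d by positivity) (by omega)

lemma vv_one_ne_eV_zero (hd1 : 1 ≤ d) : vv d 1 ≠ eV d 0 := by
  have : (2:ℕ) ≤ 2 ^ d := by have := pw (show 1 ≤ d from hd1); omega
  rw [vv, eV]
  exact chi_ne (show (1:ℕ) < 2 ^ d by omega) (by omega)

lemma vv_one_ne_tLeaf {e : ℕ} : vv d 1 ≠ tLeaf d e := by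
  have : (1:ℕ) ≤ 2 ^ e := Nat.one_le_two_pow
  rw [vv, tLeaf]
  exact chi_ne (show (0:ℕ) < 2 ^ d by positivity) (by omega)

section Xh

variable (hd2 : 2 ≤ d)
include hd2

lemma four_le : (4:ℕ) ≤ 2 ^ d := by
  have := pw (show 2 ≤ d from hd2)
  omega

lemma xh_ne_ww : xh d ≠ ww d := by
  rw [xh, ww]
  exact chi_ne (show (0:ℕ) < 2 ^ d by positivity) (by simp)

lemma xh_ne_vv_one : xh d ≠ vv d 1 := by
  have := four_le hd2
  rw [xh, vv]
  exact chi_ne (show (3:ℕ) < 2 ^ d by omega) (by omega)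

lemma xh_ne_eV_zero : xh d ≠ eV d 0 := by
  have := four_le hd2
  rw [xh, eV]
  exact chi_ne (show (3:ℕ) < 2 ^ d by omega) (by omega)

lemma xh_ne_eV_one : xh d ≠ eV d 1 := by
  rw [xh, eV]
  exact chi_ne (show (0:ℕ) < 2 ^ d by positivity) (by omega)

lemma xh_ne_tLeaf {e : ℕ} (he1 : 1 ≤ e) : xh d ≠ tLeaf d e := by
  have : (1:ℕ) ≤ 2 ^ e := Nat.one_le_two_pow
  rw [xh, tLeaf]
  exact chi_ne (show (0:ℕ) < 2 ^ d by positivity) (by omega)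

lemma xh_ne_uu {j : ℕ} (hj1 : 1 ≤ j) : xh d ≠ uu d j := by
  have : (1:ℕ) ≤ 2 ^ j := Nat.one_le_two_pow
  rw [xh, uu]
  exact chi_ne (show (0:ℕ) < 2 ^ d by positivity) (by omega)

lemma xh_ne_fLeaf {j : ℕ} (hj1 : 1 ≤ j) (hjd : j + 1 ≤ d) : xh d ≠ fLeaf d j := by
  have h4 := four_le hd2
  rcases eq_or_lt_of_le hj1 with h | h
  · subst h
    rw [xh, fLeaf]
    exact chi_ne (show (2:ℕ) < 2 ^ d by omega) (by norm_num)
  · have : (4:ℕ) ≤ 2 ^ j := by have := pw (show 2 ≤ j by omega); omega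
    rw [xh, fLeaf]
    exact chi_ne (show (3:ℕ) < 2 ^ d by omega) (by omega)

lemma xh_ne_dsLeaf {j e : ℕ} (hj1 : 1 ≤ j) (hjd : j + 1 ≤ d) (he : e ≤ d - 1) :
    xh d ≠ dsLeaf d j e := by
  have h4 := four_le hd2
  have hpe : (1:ℕ) ≤ 2 ^ e := Nat.one_le_two_pow
  have hpj : (2:ℕ) ≤ 2 ^ j := by have := pw (show 1 ≤ j from hj1); omega
  rcases lt_trichotomy e j with ha | ha | ha
  · rw [xh]; simp only [dsLeaf]; rw [if_pos ha]
    exact chi_ne (show (1:ℕ) < 2 ^ d by omega) (by omega)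
  · rw [xh]; simp only [dsLeaf]; rw [if_neg (by omega), if_pos ha]
    exact chi_ne (show (1:ℕ) < 2 ^ d by omega) (by omega)
  · rw [xh]; simp only [dsLeaf]; rw [if_neg (by omega), if_neg (by omega)]
    exact chi_ne (show (0:ℕ) < 2 ^ d by positivity) (by omega)

end Xh

end Concrete

section StarSub

variable {α : Type*} (G : SimpleGraph α)

/-- The star subgraph with center `c` and leaves `l i`. -/
def starSub {m : ℕ} (c : α) (l : Fin m → α) (hadj : ∀ i, G.Adj c (l i)) : G.Subgraph where
  verts := insert c (Set.range l)
  Adj x y := (x = c ∧ ∃ i, l i = y) ∨ (y = c ∧ ∃ i, l i = x)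
  adj_sub := by
    rintro x y (⟨rfl, i, rfl⟩ | ⟨rfl, i, rfl⟩)
    · exact hadj i
    · exact (hadj i).symm
  edge_vert := by
    rintro x y (⟨rfl, _⟩ | ⟨_, i, rfl⟩)
    · exact Set.mem_insert _ _
    · exact Set.mem_insert_iff.2 (Or.inr ⟨i, rfl⟩)
  symm := by
    constructor
    rintro x y (h | h)
    · exact Or.inr h
    · exact Or.inl h

lemma starSub_verts {m : ℕ} (c : α) (l : Fin m → α) (hadj : ∀ i, G.Adj c (l i)) :
    (starSub G c l hadj).verts = insert c (Set.range l) := rfl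

noncomputable def starSubIso {m : ℕ} (c : α) (l : Fin m → α) (hadj : ∀ i, G.Adj c (l i))
    (hc : ∀ i, l i ≠ c) (hinj : Function.Injective l) :
    (starSub G c l hadj).coe ≃g star m := by
  have hmem : ∀ i, l i ∈ (starSub G c l hadj).verts := fun i => Or.inr ⟨i, rfl⟩
  have hcmem : c ∈ (starSub G c l hadj).verts := Set.mem_insert _ _
  let f : Fin (m + 1) → (starSub G c l hadj).verts :=
    Fin.cons ⟨c, hcmem⟩ (fun i => ⟨l i, hmem i⟩)
  have hbij : Function.Bijective f := by
    constructor
    · intro a b hab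
      induction a using Fin.cases <;> induction b using Fin.cases <;>
        simp only [f, Fin.cons_zero, Fin.cons_succ, Subtype.mk.injEq] at hab ⊢
      · exact (hc _ hab.symm).elim
      · exact (hc _ hab).elim
      · exact congrArg Fin.succ (hinj hab)
    · rintro ⟨x, hx | ⟨i, rfl⟩⟩
      · exact ⟨0, by simp only [f, Fin.cons_zero]; exact Subtype.ext hx.symm⟩
      · exact ⟨i.succ, by simp only [f, Fin.cons_succ]⟩
  refine ⟨(Equiv.ofBijective f hbij).symm, ?_⟩
  intro a b
  rw [SimpleGraph.Subgraph.coe_adj]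
  rcases hbij.surjective a with ⟨x, rfl⟩
  rcases hbij.surjective b with ⟨y, rfl⟩
  rw [Equiv.ofBijective_symm_apply_apply, Equiv.ofBijective_symm_apply_apply]
  induction x using Fin.cases <;> induction y using Fin.cases <;>
    simp only [f, Fin.cons_zero, Fin.cons_succ]
  · constructor
    · rintro (⟨-, h⟩ | ⟨-, h⟩) <;> exact absurd rfl h
    · rintro (⟨-, i, hi⟩ | ⟨-, i, hi⟩) <;> exact (hc i hi).elim
  · constructor
    · intro _; exact Or.inl ⟨rfl, _, rfl⟩
    · intro _; exact Or.inl ⟨rfl, Fin.succ_ne_zero _⟩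
  · constructor
    · intro _; exact Or.inr ⟨rfl, _, rfl⟩
    · intro _; exact Or.inr ⟨rfl, Fin.succ_ne_zero _⟩
  · constructor
    · rintro (⟨h, -⟩ | ⟨h, -⟩) <;> exact (Fin.succ_ne_zero _ h).elim
    · rintro (⟨h, -⟩ | ⟨h, -⟩) <;> exact (hc _ h).elim

end StarSub


/-! ### The stars -/

section Stars

variable {d m : ℕ}

/-- Leaves of the star centered at `vv d 1`. -/
noncomputable def l0 (d m : ℕ) : Fin m → V d := fun i =>
  if (i : ℕ) = 0 then eV d 1 else if (i : ℕ) = 1 then eV d 0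
  else tLeaf d ((i : ℕ) - 1)

/-- Exponent rotation. -/
def expo (d j i : ℕ) : ℕ := if j - 1 + i < d then j - 1 + i else j - 1 + i - d

/-- Leaves of the star centered at `uu d j`. -/
noncomputable def lj (d m j : ℕ) : Fin m → V d := fun i =>
  if (i : ℕ) = d then fLeaf d j else dsLeaf d j (expo d j (i : ℕ))

lemma expo_le {j i : ℕ} (hj1 : 1 ≤ j) (hjd : j + 1 ≤ d) (hi : i ≤ d - 1) :
    expo d j i ≤ d - 1 := by
  unfold expo; split_ifs <;> omega

lemma adj_l0 (hd : 1 ≤ d) (hm' : m ≤ d + 1) :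
    ∀ i : Fin m, (graph d).Adj (vv d 1) (l0 d m i) := by
  intro i
  have hi := i.isLt
  refine Or.inl ?_
  simp only [l0]
  split_ifs with h0 h1
  · exact ⟨vv_one_ne_eV_one, Or.inl flip_vv_zero.symm⟩
  · exact ⟨vv_one_ne_eV_zero hd, Or.inr (Or.inl flip_vv_one.symm)⟩
  · have he1 : 1 ≤ (i : ℕ) - 1 := by omega
    have heD : (i : ℕ) - 1 + 1 ≤ d := by omega
    refine ⟨vv_one_ne_tLeaf, Or.inr (Or.inr ⟨d - ((i : ℕ) - 1), by omega, by omega, ?_⟩)⟩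
    rw [show d - (d - ((i : ℕ) - 1)) = (i : ℕ) - 1 by omega]
    exact (ds_vv he1 heD).symm

lemma inj_l0 (hd : 1 ≤ d) (hm' : m ≤ d + 1) : Function.Injective (l0 d m) := by
  have key : ∀ a b : Fin m, (a : ℕ) < (b : ℕ) → l0 d m a ≠ l0 d m b := by
    intro a b hab
    have hb := b.isLt
    simp only [l0]
    split_ifs with h1 h2 h3 h4 h5 h6 h7 <;> try omega
    · exact eV_one_ne_zero
    · exact eV_one_ne_tLeaf (by omega) hd
    · exact eV_zero_ne_tLeaf
    · exact tLeaf_inj_lt (by omega) (by omega) hd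
  intro a b h
  by_contra hne
  have hne' : (a : ℕ) ≠ (b : ℕ) := fun hh => hne (Fin.ext hh)
  rcases hne'.lt_or_gt with hlt | hlt
  · exact key a b hlt h
  · exact key b a hlt h.symm

lemma nc_l0 (hd : 1 ≤ d) : ∀ i : Fin m, l0 d m i ≠ vv d 1 := by
  intro i
  simp only [l0]
  split_ifs
  · exact vv_one_ne_eV_one.symm
  · exact (vv_one_ne_eV_zero hd).symm
  · exact vv_one_ne_tLeaf.symm

lemma ww_notin_S0 (hd : 1 ≤ d) (hm' : m ≤ d + 1) :
    ww d ∉ insert (vv d 1) (Set.range (l0 d m)) := by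
  have h2d : (2:ℕ) ≤ 2 ^ d := by have := pw (show 1 ≤ d from hd); omega
  rintro (h | ⟨i, hl⟩)
  · exact ww_ne_vv h
  · have hi := i.isLt
    revert hl
    simp only [l0]
    split_ifs
    · exact fun h => ww_ne_eV (by omega) h.symm
    · exact fun h => ww_ne_eV (by omega) h.symm
    · exact fun h => ww_ne_tLeaf (by omega) h.symm

lemma xh_notin_S0 (hd2 : 2 ≤ d) (hm' : m ≤ d + 1) :
    xh d ∉ insert (vv d 1) (Set.range (l0 d m)) := by
  rintro (h | ⟨i, hl⟩)
  · exact xh_ne_vv_one hd2 h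
  · have hi := i.isLt
    revert hl
    simp only [l0]
    split_ifs
    · exact fun h => xh_ne_eV_one hd2 h.symm
    · exact fun h => xh_ne_eV_zero hd2 h.symm
    · exact fun h => xh_ne_tLeaf hd2 (by omega) h.symm

lemma adj_lj {j : ℕ} (hj1 : 1 ≤ j) (hjd : j + 1 ≤ d) (hm' : m ≤ d + 1) :
    ∀ i : Fin m, (graph d).Adj (uu d j) (lj d m j i) := by
  intro i
  have hi := i.isLt
  refine Or.inl ?_
  simp only [lj]
  split_ifs with h0
  · exact ⟨uu_ne_fLeaf, Or.inl (flip_uu hj1).symm⟩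
  · have he : expo d j (i : ℕ) ≤ d - 1 := expo_le hj1 hjd (by omega)
    refine ⟨uu_ne_dsLeaf hj1 hjd he,
      Or.inr (Or.inr ⟨d - expo d j (i : ℕ), by omega, by omega, ?_⟩)⟩
    rw [show d - (d - expo d j (i : ℕ)) = expo d j (i : ℕ) by omega]
    exact (ds_uu hj1 hjd (by omega)).symm

lemma inj_lj {j : ℕ} (hj1 : 1 ≤ j) (hjd : j + 1 ≤ d) (hm' : m ≤ d + 1) :
    Function.Injective (lj d m j) := by
  have key : ∀ a b : Fin m, (a : ℕ) < (b : ℕ) → lj d m j a ≠ lj d m j b := by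
    intro a b hab
    have hb := b.isLt
    simp only [lj]
    split_ifs with h1 h2 h2 <;> try omega
    · exact (fLeaf_ne_dsLeaf hj1 hjd (expo_le hj1 hjd (by omega))).symm
    · refine dsLeaf_inj hj1 hjd (expo_le hj1 hjd (by omega))
        (expo_le hj1 hjd (by omega)) ?_
      unfold expo
      split_ifs <;> omega
  intro a b h
  by_contra hne
  have hne' : (a : ℕ) ≠ (b : ℕ) := fun hh => hne (Fin.ext hh)
  rcases hne'.lt_or_gt with hlt | hlt
  · exact key a b hlt h
  · exact key b a hlt h.symm

lemma nc_lj {j : ℕ} (hj1 : 1 ≤ j) (hjd : j + 1 ≤ d) (hm' : m ≤ d + 1) :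
    ∀ i : Fin m, lj d m j i ≠ uu d j := by
  intro i
  have hi := i.isLt
  simp only [lj]
  split_ifs with h0
  · exact uu_ne_fLeaf.symm
  · exact (uu_ne_dsLeaf hj1 hjd (expo_le hj1 hjd (by omega))).symm

lemma ww_notin_SJ {j : ℕ} (hj1 : 1 ≤ j) (hjd : j + 1 ≤ d) (hm' : m ≤ d + 1) :
    ww d ∉ insert (uu d j) (Set.range (lj d m j)) := by
  rintro (h | ⟨i, hl⟩)
  · exact ww_ne_uu hjd h
  · have hi := i.isLt
    revert hl
    simp only [lj]
    split_ifs
    · exact fun h => ww_ne_fLeaf h.symm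
    · exact fun h => ww_ne_dsLeaf hj1 hjd (expo_le hj1 hjd (by omega)) h.symm

lemma xh_notin_SJ {j : ℕ} (hd2 : 2 ≤ d) (hj1 : 1 ≤ j) (hjd : j + 1 ≤ d) (hm' : m ≤ d + 1) :
    xh d ∉ insert (uu d j) (Set.range (lj d m j)) := by
  rintro (h | ⟨i, hl⟩)
  · exact xh_ne_uu hd2 hj1 h
  · have hi := i.isLt
    revert hl
    simp only [lj]
    split_ifs
    · exact fun h => xh_ne_fLeaf hd2 hj1 hjd h.symm
    · exact fun h => xh_ne_dsLeaf hd2 hj1 hjd (expo_le hj1 hjd (by omega)) h.symm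

lemma l0_zero (hm : 2 ≤ m) : l0 d m ⟨0, by omega⟩ = eV d 1 := by
  simp only [l0]; rfl

lemma l0_one (hm : 2 ≤ m) : l0 d m ⟨1, by omega⟩ = eV d 0 := by
  simp only [l0]; norm_num

lemma lj_zero {j : ℕ} (hm : 2 ≤ m) (hd2 : 2 ≤ d) (hj1 : 1 ≤ j) (hjd : j + 1 ≤ d) :
    lj d m j ⟨0, by omega⟩ = vv d (j + 1) := by
  have h0 : ((⟨0, by omega⟩ : Fin m) : ℕ) = 0 := rfl
  simp only [lj, h0]
  rw [if_neg (by omega), show expo d j 0 = j - 1 by unfold expo; split_ifs <;> omega]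
  exact (vv_succ_eq_dsLeaf hj1).symm

lemma lj_one {j : ℕ} (hm : 2 ≤ m) (hd2 : 2 ≤ d) (hj1 : 1 ≤ j) (hjd : j + 1 ≤ d) :
    lj d m j ⟨1, by omega⟩ = vv d j := by
  have h1 : ((⟨1, by omega⟩ : Fin m) : ℕ) = 1 := rfl
  simp only [lj, h1]
  rw [if_neg (by omega), show expo d j 1 = j by unfold expo; split_ifs <;> omega]
  exact vv_eq_dsLeaf.symm

end Stars

/-- `κ(FDSC_n; K_{1,m}) ≤ ⌊d/2⌋ + 1` for `d ≥ 1` and `2 ≤ m ≤ d + 1`. -/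
theorem stmt17 (d m : ℕ) (hd : 1 ≤ d) (hm : 2 ≤ m) (hm' : m ≤ d + 1) :
    structConn (graph d) (star m) ≤ d / 2 + 1 := by
  classical
  have adj0 : ∀ i : Fin m, (graph d).Adj (vv d 1) (l0 d m i) := adj_l0 hd hm'
  set S0 : (graph d).Subgraph := starSub (graph d) (vv d 1) (l0 d m) adj0 with hS0def
  have adjj : ∀ j, (1 ≤ j ∧ j + 1 ≤ d) → ∀ i : Fin m, (graph d).Adj (uu d j) (lj d m j i) :=
    fun j h => adj_lj h.1 h.2 hm'
  set SJ : ℕ → (graph d).Subgraph := (fun j =>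
    if h : 1 ≤ j ∧ j + 1 ≤ d then starSub (graph d) (uu d j) (lj d m j) (adjj j h)
    else S0) with hSJdef
  set F : Finset (graph d).Subgraph :=
    insert S0 ((Finset.range (d / 2)).image fun i => SJ (min (2 * i + 2) (d - 1))) with hFdef
  have hval : ∀ j (h : 1 ≤ j ∧ j + 1 ≤ d),
      SJ j = starSub (graph d) (uu d j) (lj d m j) (adjj j h) := fun j h => dif_pos h
  have hSJverts : ∀ j (h : 1 ≤ j ∧ j + 1 ≤ d),
      (SJ j).verts = insert (uu d j) (Set.range (lj d m j)) := by
    intro j h; rw [hval j h]; rfl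
  have hS0verts : S0.verts = insert (vv d 1) (Set.range (l0 d m)) := rfl
  have hFcases : ∀ S ∈ F, S = S0 ∨ ∃ i < d / 2, S = SJ (min (2 * i + 2) (d - 1)) := by
    intro S hS
    rcases Finset.mem_insert.1 hS with h | h
    · exact Or.inl h
    · obtain ⟨i, hi, rfl⟩ := Finset.mem_image.1 h
      exact Or.inr ⟨i, Finset.mem_range.1 hi, rfl⟩
  have hjprop : ∀ i, i < d / 2 → 1 ≤ min (2 * i + 2) (d - 1) ∧ min (2 * i + 2) (d - 1) + 1 ≤ d := by
    intro i hi; omega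
  have hS0F : S0 ∈ F := Finset.mem_insert_self _ _
  have hwR : ww d ∉ ⋃ S ∈ F, S.verts := by
    intro hmem
    rw [Set.mem_iUnion₂] at hmem
    obtain ⟨S, hS, hu⟩ := hmem
    rcases hFcases S hS with rfl | ⟨i, hi, rfl⟩
    · rw [hS0verts] at hu
      exact ww_notin_S0 hd hm' hu
    · rw [hSJverts _ (hjprop i hi)] at hu
      exact ww_notin_SJ (hjprop i hi).1 (hjprop i hi).2 hm' hu
  have hcov : ∀ v, (graph d).Adj (ww d) v → v ∈ ⋃ S ∈ F, S.verts := by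
    intro v hv
    rcases adj_iff.1 hv with ⟨-, h | h | ⟨k, hk1, hkd, h⟩⟩
    · refine Set.mem_iUnion₂.2 ⟨S0, hS0F, ?_⟩
      rw [h, flip_ww_zero, hS0verts, ← l0_one (d := d) hm]
      exact Set.mem_insert_iff.2 (Or.inr ⟨_, rfl⟩)
    · refine Set.mem_iUnion₂.2 ⟨S0, hS0F, ?_⟩
      rw [h, flip_ww_one, hS0verts, ← l0_zero (d := d) hm]
      exact Set.mem_insert_iff.2 (Or.inr ⟨_, rfl⟩)
    · rw [ds_ww hk1 hkd] at h
      by_cases hl : d - k + 1 = 1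
      · refine Set.mem_iUnion₂.2 ⟨S0, hS0F, ?_⟩
        rw [h, hl, hS0verts]
        exact Set.mem_insert _ _
      · have hd2 : 2 ≤ d := by omega
        set l := d - k + 1 with hldef
        have hl2 : 2 ≤ l ∧ l ≤ d := by omega
        set i := (l - 2) / 2 with hidef
        have hi : i < d / 2 := by omega
        set j := min (2 * i + 2) (d - 1) with hjdef
        have hjp := hjprop i hi
        have hSJF : SJ j ∈ F := Finset.mem_insert.2 (Or.inr
          (Finset.mem_image.2 ⟨i, Finset.mem_range.2 hi, rfl⟩))
        refine Set.mem_iUnion₂.2 ⟨SJ j, hSJF, ?_⟩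
        rw [hSJverts _ hjp]
        have hlj : l = j ∨ l = j + 1 := by omega
        rcases hlj with hlj | hlj
        · rw [h, hlj, ← lj_one (m := m) hm hd2 hjp.1 hjp.2]
          exact Set.mem_insert_iff.2 (Or.inr ⟨_, rfl⟩)
        · rw [h, hlj, ← lj_zero (m := m) hm hd2 hjp.1 hjp.2]
          exact Set.mem_insert_iff.2 (Or.inr ⟨_, rfl⟩)
  have hcard : F.card ≤ d / 2 + 1 := by
    refine le_trans (Finset.card_insert_le _ _) ?_
    have h := Finset.card_image_le (s := Finset.range (d / 2))
      (f := fun i => SJ (min (2 * i + 2) (d - 1)))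
    rw [Finset.card_range] at h
    omega
  have hiso : ∀ S ∈ F, Nonempty (S.coe ≃g star m) := by
    intro S hS
    rcases hFcases S hS with rfl | ⟨i, hi, rfl⟩
    · exact ⟨starSubIso _ _ _ _ (nc_l0 hd) (inj_l0 hd hm')⟩
    · have hjp := hjprop i hi
      rw [hval _ hjp]
      exact ⟨starSubIso _ _ _ _ (nc_lj hjp.1 hjp.2 hm') (inj_lj hjp.1 hjp.2 hm')⟩
  have hdisc : Disconnects (graph d) (⋃ S ∈ F, S.verts) := by
    rcases Nat.lt_or_ge d 2 with hd1 | hd2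
    · refine Or.inr ?_
      intro a ha b hb
      have key : ∀ u : V d, u ∉ (⋃ S ∈ F, S.verts) → u = ww d := by
        intro u hu
        have hnot : u ∉ S0.verts := fun hh => hu (Set.mem_iUnion₂.2 ⟨S0, hS0F, hh⟩)
        rw [hS0verts] at hnot
        have h1 : u ≠ vv d 1 := fun hh => hnot (hh ▸ Set.mem_insert _ _)
        have h2 : u ≠ eV d 1 := by
          intro hh
          exact hnot (Set.mem_insert_iff.2 (Or.inr ⟨⟨0, by omega⟩, by rw [l0_zero hm, hh]⟩))
        have h3 : u ≠ eV d 0 := by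
          intro hh
          exact hnot (Set.mem_insert_iff.2 (Or.inr ⟨⟨1, by omega⟩, by rw [l0_one hm, hh]⟩))
        have hdd : d = 1 := by omega
        subst hdd
        cases g0 : get u 0 <;> cases g1 : get u 1
        · rw [eq_chi u, ww]
          refine chi_ext (fun i hi => ?_)
          have : i = 0 ∨ i = 1 := by omega
          rcases this with rfl | rfl <;> simp [g0, g1]
        · exact absurd (by
            rw [eq_chi u, eV]
            refine chi_ext (fun i hi => ?_)
            have : i = 0 ∨ i = 1 := by omega
            rcases this with rfl | rfl <;> simp [g0, g1]) h2
        · exact absurd (by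
            rw [eq_chi u, eV]
            refine chi_ext (fun i hi => ?_)
            have : i = 0 ∨ i = 1 := by omega
            rcases this with rfl | rfl <;> simp [g0, g1]) h3
        · exact absurd (by
            rw [eq_chi u, vv]
            refine chi_ext (fun i hi => ?_)
            have : i = 0 ∨ i = 1 := by omega
            rcases this with rfl | rfl <;> simp [g0, g1]) h1
      rw [key a ha, key b hb]
    · refine Or.inl ?_
      intro hconn
      have hxR : xh d ∉ ⋃ S ∈ F, S.verts := by
        intro hmem
        rw [Set.mem_iUnion₂] at hmem
        obtain ⟨S, hS, hu⟩ := hmem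
        rcases hFcases S hS with rfl | ⟨i, hi, rfl⟩
        · rw [hS0verts] at hu
          exact xh_notin_S0 hd2 hm' hu
        · rw [hSJverts _ (hjprop i hi)] at hu
          exact xh_notin_SJ hd2 (hjprop i hi).1 (hjprop i hi).2 hm' hu
      obtain ⟨p⟩ := hconn.preconnected ⟨ww d, hwR⟩ ⟨xh d, hxR⟩
      have hne : (⟨ww d, hwR⟩ : ↑(⋃ S ∈ F, S.verts)ᶜ) ≠ ⟨xh d, hxR⟩ := by
        intro hh
        exact (xh_ne_ww hd2) (congrArg Subtype.val hh).symm
      have hnil : ¬ p.Nil := SimpleGraph.Walk.not_nil_of_ne hne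
      have hadj : (graph d).Adj (ww d) ((p.getVert 1 : ↑(⋃ S ∈ F, S.verts)ᶜ) : V d) :=
        (p.firstDart hnil).adj
      exact (p.getVert 1).2 (hcov _ hadj)
  refine le_trans (Nat.sInf_le ?_) hcard
  exact ⟨F, rfl, hiso, hdisc⟩

end FDSC
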